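/- Let ρ and σ be positive definite Hermitian matrices and α a real number. Then Tr(ρ · (ρ^{-1/2} σ ρ^{-1/2})^{1-α}) = Tr(σ · (σ^{-1/2} ρ σ^{-1/2})^{α}). -/

import Mathlib

open Matrix Polynomial
open scoped ComplexOrder

variable {n : Type*} [Fintype n] [DecidableEq n]

/-- Real power of a Hermitian matrix via the functional calculus
(junk value `0` on non-Hermitian input). For a positive definite matrix this is
the unique positive definite `r`-th power. -/
noncomputable def mpow (A : Matrix n n ℂ) (r : ℝ) : Matrix n n ℂ :=
  if hA : A.IsHermitian then hA.cfc (fun x : ℝ => x ^ r) else 0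

/-- The matrix geometric mean `A⁻¹ # C = A^{-1/2} (A^{1/2} C A^{1/2})^{1/2} A^{-1/2}`. -/
noncomputable def invGeoMean (A C : Matrix n n ℂ) : Matrix n n ℂ :=
  mpow A (-(1/2)) * mpow (mpow A (1/2) * C * mpow A (1/2)) (1/2) * mpow A (-(1/2))

lemma contOn_spec {M : Matrix n n ℂ} (f : ℝ → ℝ) : ContinuousOn f (spectrum ℝ M) :=
  (Matrix.finite_real_spectrum (A := M)).continuousOn f

lemma mpow_eq {A : Matrix n n ℂ} (hA : A.IsHermitian) (r : ℝ) :
    mpow A r = cfc (fun x : ℝ => x ^ r) A := by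
  rw [mpow, dif_pos hA, hA.cfc_eq]

lemma mpow_isHermitian {A : Matrix n n ℂ} (hA : A.IsHermitian) (r : ℝ) :
    (mpow A r).IsHermitian := by
  rw [mpow_eq hA]
  exact cfc_predicate _ A

lemma spec_pos {M : Matrix n n ℂ} (hM : M.PosDef) {x : ℝ} (hx : x ∈ spectrum ℝ M) : 0 < x := by
  rw [hM.isHermitian.spectrum_real_eq_range_eigenvalues] at hx
  obtain ⟨i, rfl⟩ := hx
  exact hM.eigenvalues_pos i

lemma mpow_mul_mpow {M : Matrix n n ℂ} (hM : M.PosDef) (a b : ℝ) :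
    mpow M a * mpow M b = mpow M (a + b) := by
  have h : IsSelfAdjoint M := hM.isHermitian
  rw [mpow_eq hM.isHermitian, mpow_eq hM.isHermitian, mpow_eq hM.isHermitian,
    ← cfc_mul _ _ M (contOn_spec _) (contOn_spec _)]
  exact cfc_congr fun x hx => (Real.rpow_add (spec_pos hM hx) a b).symm

lemma mpow_zero {M : Matrix n n ℂ} (hM : M.IsHermitian) : mpow M 0 = 1 := by
  have h : IsSelfAdjoint M := hM
  rw [mpow_eq hM]
  calc cfc (fun x : ℝ => x ^ (0:ℝ)) M = cfc (fun _ : ℝ => (1:ℝ)) M := by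
        exact cfc_congr fun x _ => Real.rpow_zero x
    _ = 1 := cfc_const_one ℝ M

lemma mpow_one {M : Matrix n n ℂ} (hM : M.IsHermitian) : mpow M 1 = M := by
  have h : IsSelfAdjoint M := hM
  rw [mpow_eq hM]
  calc cfc (fun x : ℝ => x ^ (1:ℝ)) M = cfc (fun x : ℝ => x) M := by
        exact cfc_congr fun x _ => Real.rpow_one x
    _ = M := cfc_id' ℝ M


lemma mpow_inv {P : Matrix n n ℂ} (hP : P.PosDef) (r : ℝ) : mpow P⁻¹ r = mpow P (-r) := by
  have h : IsSelfAdjoint P := hP.isHermitian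
  have hinv : P⁻¹ = mpow P (-1) := by
    refine (Matrix.inv_eq_left_inv ?_)
    nth_rewrite 2 [show P = mpow P 1 from (mpow_one hP.isHermitian).symm]
    rw [mpow_mul_mpow hP]
    norm_num [mpow_zero hP.isHermitian]
  rw [hinv, mpow_eq (mpow_isHermitian hP.isHermitian _), mpow_eq hP.isHermitian,
    mpow_eq hP.isHermitian,
    ← cfc_comp' (fun x : ℝ => x ^ r) (fun x : ℝ => x ^ (-1 : ℝ)) P
      (((Matrix.finite_real_spectrum (A := P)).image _).continuousOn _) (contOn_spec _)]
  refine cfc_congr fun x hx => ?_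
  have hx' := (spec_pos hP hx).le
  rw [← Real.rpow_mul hx']
  norm_num

lemma posDef_conjTranspose_mul_self {X Y : Matrix n n ℂ} (h : Y * X = 1) :
    (Xᴴ * X).PosDef := by
  refine .of_dotProduct_mulVec_pos (isHermitian_conjTranspose_mul_self _) fun v hv => ?_
  rw [← mulVec_mulVec, dotProduct_mulVec, vecMul_conjTranspose, star_star]
  refine dotProduct_star_self_pos_iff.mpr fun hXv => hv ?_
  calc v = (Y * X) *ᵥ v := by rw [h, one_mulVec]
    _ = Y *ᵥ (X *ᵥ v) := by rw [← mulVec_mulVec]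
    _ = 0 := by rw [hXv, mulVec_zero]

lemma cfc_conj_comm {M N X Y : Matrix n n ℂ} (hM : M.IsHermitian) (hN : N.IsHermitian)
    (hXY : X * Y = 1) (hYX : Y * X = 1) (hcomm : N * X = X * M) (f : ℝ → ℝ) :
    cfc f N * X = X * cfc f M := by
  classical
  have hM' : IsSelfAdjoint M := hM
  have hN' : IsSelfAdjoint N := hN
  set u : (Matrix n n ℂ)ˣ := ⟨X, Y, hXY, hYX⟩ with hu
  have hNeq : N = (u : Matrix n n ℂ) * M * (↑u⁻¹ : Matrix n n ℂ) := by
    show N = X * M * Y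
    have h2 : N * X * Y = X * M * Y := by rw [hcomm]
    calc N = N * (X * Y) := by rw [hXY, mul_one]
    _ = X * M * Y := by rw [← mul_assoc, h2]
  have hspec : spectrum ℝ N = spectrum ℝ M := by
    rw [hNeq]; exact spectrum.units_conjugate
  set s := (Matrix.finite_real_spectrum (A := M)).toFinset with hs
  set p : Polynomial ℝ := Lagrange.interpolate s id f with hp
  have hnode : ∀ x ∈ spectrum ℝ M, p.eval x = f x := by
    intro x hx
    exact Lagrange.eval_interpolate_at_node f (Set.injOn_id _)
      ((Matrix.finite_real_spectrum (A := M)).mem_toFinset.mpr hx)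
  have hcM : cfc f M = aeval M p := by
    rw [← cfc_polynomial p M hM']
    exact cfc_congr fun x hx => (hnode x hx).symm
  have hcN : cfc f N = aeval N p := by
    rw [← cfc_polynomial p N hN']
    exact cfc_congr fun x hx => (hnode x (hspec ▸ hx)).symm
  have hpow : ∀ k : ℕ, N ^ k * X = X * M ^ k := by
    intro k; induction k with
    | zero => simp
    | succ k ih =>
        rw [pow_succ, pow_succ, mul_assoc, hcomm, ← mul_assoc, ih, mul_assoc]
  have key : ∀ q : Polynomial ℝ, aeval N q * X = X * aeval M q := by
    intro q
    induction q using Polynomial.induction_on' with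
    | add q₁ q₂ h1 h2 => rw [map_add, map_add, add_mul, mul_add, h1, h2]
    | monomial k c =>
        rw [aeval_monomial, aeval_monomial, mul_assoc, hpow k, ← mul_assoc,
          Algebra.commutes c X, mul_assoc]
  rw [hcM, hcN, key]

set_option maxHeartbeats 1000000 in
/-- For positive definite Hermitian `ρ`, `σ` and real `α`:
`Tr(ρ (ρ^{-1/2} σ ρ^{-1/2})^{1-α}) = Tr(σ (σ^{-1/2} ρ σ^{-1/2})^{α})`. -/
theorem geometric_renyi_trace_symm (ρ σ : Matrix n n ℂ)
    (hρ : ρ.PosDef) (hσ : σ.PosDef) (α : ℝ) :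
    (ρ * mpow (mpow ρ (-(1/2)) * σ * mpow ρ (-(1/2))) (1 - α)).trace
      = (σ * mpow (mpow σ (-(1/2)) * ρ * mpow σ (-(1/2))) α).trace := by
  have hρH := hρ.isHermitian
  have hσH := hσ.isHermitian
  set ph := mpow ρ (1/2) with hph_def
  set pi := mpow ρ (-(1/2)) with hpi_def
  set sh := mpow σ (1/2) with hsh_def
  set si := mpow σ (-(1/2)) with hsi_def
  have hph : ph.IsHermitian := mpow_isHermitian hρH _
  have hpi : pi.IsHermitian := mpow_isHermitian hρH _
  have hsh : sh.IsHermitian := mpow_isHermitian hσH _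
  have hsi : si.IsHermitian := mpow_isHermitian hσH _
  have ppi : ph * pi = 1 := by
    rw [hph_def, hpi_def, mpow_mul_mpow hρ, show (1/2 + -(1/2) : ℝ) = 0 by norm_num,
      mpow_zero hρH]
  have pip : pi * ph = 1 := by
    rw [hph_def, hpi_def, mpow_mul_mpow hρ, show (-(1/2) + 1/2 : ℝ) = 0 by norm_num,
      mpow_zero hρH]
  have pp : ph * ph = ρ := by
    rw [hph_def, mpow_mul_mpow hρ, show (1/2 + 1/2 : ℝ) = 1 by norm_num, mpow_one hρH]
  have shsi : sh * si = 1 := by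
    rw [hsh_def, hsi_def, mpow_mul_mpow hσ, show (1/2 + -(1/2) : ℝ) = 0 by norm_num,
      mpow_zero hσH]
  have sish : si * sh = 1 := by
    rw [hsh_def, hsi_def, mpow_mul_mpow hσ, show (-(1/2) + 1/2 : ℝ) = 0 by norm_num,
      mpow_zero hσH]
  have shsh : sh * sh = σ := by
    rw [hsh_def, mpow_mul_mpow hσ, show (1/2 + 1/2 : ℝ) = 1 by norm_num, mpow_one hσH]
  have siσ : si * σ = sh := by
    conv_lhs => rw [show σ = mpow σ 1 from (mpow_one hσH).symm]
    rw [hsi_def, hsh_def, mpow_mul_mpow hσ]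
    norm_num
  set X := sh * pi with hX_def
  set Y := ph * si with hY_def
  have hXY : X * Y = 1 := by
    rw [hX_def, hY_def, mul_assoc, ← mul_assoc pi, pip, one_mul, shsi]
  have hYX : Y * X = 1 := by
    rw [hX_def, hY_def, mul_assoc, ← mul_assoc si, sish, one_mul, ppi]
  set A := pi * σ * pi with hA_def
  set B := si * ρ * si with hB_def
  have hXH : Xᴴ = pi * sh := by rw [hX_def, conjTranspose_mul, hpi.eq, hsh.eq]
  have hYH : Yᴴ = si * ph := by rw [hY_def, conjTranspose_mul, hph.eq, hsi.eq]
  have hXHX : Xᴴ * X = A := by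
    rw [hXH, hX_def, hA_def, mul_assoc, ← mul_assoc sh sh, shsh, mul_assoc]
  have hYHY : Yᴴ * Y = B := by
    rw [hYH, hY_def, hB_def, mul_assoc, ← mul_assoc ph ph, pp, mul_assoc]
  have hA : A.PosDef := hXHX ▸ posDef_conjTranspose_mul_self hYX
  have hB : B.IsHermitian := hYHY ▸ isHermitian_conjTranspose_mul_self Y
  set C := Y * Yᴴ with hC_def
  have hC : C.IsHermitian := isHermitian_mul_conjTranspose_self Y
  have hCY : C * Y = Y * B := by rw [← hYHY, hC_def, mul_assoc]
  have hYHXH : Yᴴ * Xᴴ = 1 := by rw [← conjTranspose_mul, hXY, conjTranspose_one]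
  have hCA : C * A = 1 := by
    rw [← hXHX, hC_def, mul_assoc, ← mul_assoc Yᴴ, hYHXH, one_mul, hYX]
  have hCinv : C = A⁻¹ := (Matrix.inv_eq_left_inv hCA).symm
  have hconj := cfc_conj_comm hB hC hYX hXY hCY (fun x : ℝ => x ^ α)
  have hmB : mpow B α = X * mpow C α * Y := by
    rw [mpow_eq hB, mpow_eq hC, mul_assoc, hconj, ← mul_assoc, hXY, one_mul]
  have hmC : mpow C α = mpow A (-α) := by rw [hCinv, mpow_inv hA]
  have hYσX : Y * σ * X = ρ * A := by
    rw [hY_def, hX_def, mul_assoc ph si, siσ, mul_assoc ph sh, ← mul_assoc sh sh, shsh,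
      hA_def, ← pp]
    rw [mul_assoc ph ph (pi * σ * pi), ← mul_assoc ph (pi * σ) pi, ← mul_assoc ph pi σ, ppi, one_mul]
  have hA1 : A = mpow A 1 := (mpow_one hA.isHermitian).symm
  calc (ρ * mpow A (1 - α)).trace
      = (ρ * (mpow A 1 * mpow A (-α))).trace := by
        rw [mpow_mul_mpow hA, show (1 + -α : ℝ) = 1 - α by ring]
    _ = ((Y * σ * X) * mpow A (-α)).trace := by rw [← hA1, hYσX, ← mul_assoc]
    _ = ((σ * X * mpow A (-α)) * Y).trace := by
        conv_rhs => rw [trace_mul_comm]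
        rw [← mul_assoc Y (σ * X), ← mul_assoc Y σ X]
    _ = (σ * (X * mpow A (-α) * Y)).trace := by
        rw [mul_assoc σ X, mul_assoc σ (X * mpow A (-α)) Y]
    _ = (σ * mpow B α).trace := by rw [hmB, hmC]
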